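/- arXiv:2405.05601 — 3 statements merged into one kernel-verified Lean document; each statement's English description precedes it below -/
import Mathlib

section
/- Let X be a finite set of weighted intervals partitioned into pairwise disjoint subsets X₁, …, X_p such that for all i < j, every x ∈ X_i and x' ∈ X_j satisfy w(x') ≤ w(x) (weight separation). Fix a query value s and let S = {x ∈ X : x is stabbed by s} and S_i = {x ∈ X_i : x is stabbed by s}. Suppose for some index j ≤ p we have |S₁ ∪ ⋯ ∪ S_j| ≥ k, and let T ⊆ S₁ ∪ ⋯ ∪ S_j be any set with |T| = k such that every y ∈ (S₁ ∪ ⋯ ∪ S_j) \ T and every x ∈ T satisfy w(y) ≤ w(x). Then every y ∈ S \ T and every x ∈ T satisfy w(y) ≤ w(x); that is, T is an exact top-k result for the full stabbed set S. -/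
/-- A weighted interval: a pair of real endpoints `l ≤ r` together with a real weight `w`. -/
structure WInterval where
  l : ℝ
  r : ℝ
  w : ℝ
  le : l ≤ r

noncomputable instance : DecidableEq WInterval := Classical.decEq _

/-- An interval `x` is stabbed by the query value `s` iff `x.l ≤ s ≤ x.r`. -/
def stabbed (s : ℝ) (x : WInterval) : Prop := x.l ≤ s ∧ s ≤ x.r

noncomputable instance (s : ℝ) : DecidablePred (stabbed s) := fun _ => Classical.dec _

/-!
A stabbed interval outside the first `j` parts lies in a later part, so by weight separation
it weighs at most any interval of those parts: the stabbed prefix `A` is itself top in `S`.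
Being top composes along `T ⊆ A`, so a top set of `A` is top in `S`.
-/

namespace Finset

variable {α β ι : Type*} [DecidableEq α] [Preorder β]

/-- The top-k condition without its cardinality part; `T ⊆ S` is not required either. -/
def IsTopIn (w : α → β) (T S : Finset α) : Prop :=
  ∀ y ∈ S \ T, ∀ x ∈ T, w y ≤ w x

theorem IsTopIn.trans {w : α → β} {T A S : Finset α} (hT : IsTopIn w T A) (hTA : T ⊆ A)
    (hA : IsTopIn w A S) : IsTopIn w T S := by
  intro y hy x hx
  by_cases hyA : y ∈ A
  · exact hT y (mem_sdiff.2 ⟨hyA, (mem_sdiff.1 hy).2⟩) x hx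
  · exact hA y (mem_sdiff.2 ⟨(mem_sdiff.1 hy).1, hyA⟩) x (hTA hx)

theorem isTopIn_biUnion_filter_of_isLowerSet [LinearOrder ι] {w : α → β}
    (Xs : ι → Finset α) (hsep : ∀ i j, i < j → ∀ x ∈ Xs i, ∀ x' ∈ Xs j, w x' ≤ w x)
    (P : α → Prop) [DecidablePred P] {I : Finset ι} (hI : IsLowerSet (I : Set ι))
    (U : Finset ι) :
    IsTopIn w (I.biUnion fun i => (Xs i).filter P) ((U.biUnion Xs).filter P) := by
  intro y hy x hx
  obtain ⟨⟨hyU, hyP⟩, hyI⟩ := And.imp_left mem_filter.1 (mem_sdiff.1 hy)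
  obtain ⟨i', -, hyi'⟩ := mem_biUnion.1 hyU
  obtain ⟨i, hi, hxi⟩ := mem_biUnion.1 hx
  have hi' : i' ∉ I := fun hi'I => hyI (mem_biUnion.2 ⟨i', hi'I, mem_filter.2 ⟨hyi', hyP⟩⟩)
  have hlt : i < i' := not_le.1 fun h => hi' (hI h hi)
  exact hsep i i' hlt x (mem_filter.1 hxi).1 y hyi'

end Finset

theorem interval_forest_early_termination_general
    (p : ℕ) (Xs : Fin p → Finset WInterval)
    (hsep : ∀ i j : Fin p, i < j → ∀ x ∈ Xs i, ∀ x' ∈ Xs j, x'.w ≤ x.w)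
    (s : ℝ) (j : ℕ)
    (T : Finset WInterval)
    (hTsub : T ⊆ (Finset.univ.filter (fun i : Fin p => (i : ℕ) < j)).biUnion
                (fun i => (Xs i).filter (stabbed s)))
    (hTtop : ∀ y ∈ ((Finset.univ.filter (fun i : Fin p => (i : ℕ) < j)).biUnion
                (fun i => (Xs i).filter (stabbed s))) \ T, ∀ x ∈ T, y.w ≤ x.w) :
    ∀ y ∈ ((Finset.univ.biUnion Xs).filter (stabbed s)) \ T, ∀ x ∈ T, y.w ≤ x.w := by
  have hprefix : IsLowerSet ((Finset.univ.filter fun i : Fin p => (i : ℕ) < j : Finset (Fin p)) :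
      Set (Fin p)) := by
    intro a b hba ha
    simp only [Finset.coe_filter, Finset.mem_univ, true_and, Set.mem_ofPred_eq] at ha ⊢
    exact lt_of_le_of_lt hba ha
  exact Finset.IsTopIn.trans hTtop hTsub
    (Finset.isTopIn_biUnion_filter_of_isLowerSet Xs hsep (stabbed s) hprefix Finset.univ)

/-- Early-termination correctness of the interval-forest (IF) algorithm.
`X` is partitioned into pairwise disjoint subsets `Xs 0, …, Xs (p-1)` with weight
separation (every weight in an earlier part dominates every weight in a later part).
If the union of the stabbed intervals in the first `j` parts contains at least `k`
intervals, and `T` is a top-k result for that union, then `T` is a top-k result for the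
full stabbed set `S = {x ∈ X : x stabbed by s}`. -/
theorem interval_forest_early_termination
    (p : ℕ) (Xs : Fin p → Finset WInterval)
    (hdisj : ∀ i j : Fin p, i ≠ j → Disjoint (Xs i) (Xs j))
    (hsep : ∀ i j : Fin p, i < j → ∀ x ∈ Xs i, ∀ x' ∈ Xs j, x'.w ≤ x.w)
    (s : ℝ) (k j : ℕ) (hj : j ≤ p)
    (hk : k ≤ ((Finset.univ.filter (fun i : Fin p => (i : ℕ) < j)).biUnion
                (fun i => (Xs i).filter (stabbed s))).card)
    (T : Finset WInterval)
    (hTsub : T ⊆ (Finset.univ.filter (fun i : Fin p => (i : ℕ) < j)).biUnion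
                (fun i => (Xs i).filter (stabbed s)))
    (hTcard : T.card = k)
    (hTtop : ∀ y ∈ ((Finset.univ.filter (fun i : Fin p => (i : ℕ) < j)).biUnion
                (fun i => (Xs i).filter (stabbed s))) \ T, ∀ x ∈ T, y.w ≤ x.w) :
    ∀ y ∈ ((Finset.univ.biUnion Xs).filter (stabbed s)) \ T, ∀ x ∈ T, y.w ≤ x.w :=
  interval_forest_early_termination_general p Xs hsep s j T hTsub hTtop
end

section
/- Let v and s be real numbers with s ≤ v, and let A be a list of intervals such that every x in A satisfies x.l ≤ v ≤ x.r, and A is sorted in non-decreasing order of left endpoints. Then the sublist of A consisting of the intervals stabbed by s equals the longest prefix of A all of whose elements x satisfy x.l ≤ s; that is, A.filter (fun x => x.l ≤ s ∧ s ≤ x.r) = A.takeWhile (fun x => x.l ≤ s). -/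
namespace List

theorem filter_eq_takeWhile_of_pairwise {α : Type*} {p : α → Bool} {l : List α}
    (h : l.Pairwise (fun a b => p b → p a)) : l.filter p = l.takeWhile p := by
  induction l with
  | nil => rfl
  | cons a t ih =>
    obtain ⟨ha, ht⟩ := pairwise_cons.mp h
    cases hpa : p a
    · have hnone : ∀ x ∈ t, p x = false := fun x hx => by
        simpa [hpa] using mt (ha x hx)
      simp [hpa, filter_eq_nil_iff.mpr (by simpa using hnone)]
    · simp [hpa, ih ht]

end List

/-- Early-termination correctness when scanning `A_left` of an interval-tree node with
central point `v`, for a query value `s ≤ v`: if every interval of the list `A` contains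
`v` and `A` is sorted in non-decreasing order of left endpoints, then the stabbed
intervals of `A` form exactly the longest prefix whose elements satisfy `x.l ≤ s`. -/
theorem interval_tree_left_scan_prefix
    (v s : ℝ) (hsv : s ≤ v) (A : List WInterval)
    (hcov : ∀ x ∈ A, x.l ≤ v ∧ v ≤ x.r)
    (hsort : A.Pairwise (fun a b => a.l ≤ b.l)) :
    A.filter (fun x => decide (x.l ≤ s ∧ s ≤ x.r)) =
      A.takeWhile (fun x => decide (x.l ≤ s)) := by
  have hstab : ∀ x ∈ A, (x.l ≤ s ∧ s ≤ x.r ↔ x.l ≤ s) := fun x hx =>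
    and_iff_left (hsv.trans (hcov x hx).2)
  rw [List.filter_congr fun x hx => decide_eq_decide.mpr (hstab x hx)]
  exact List.filter_eq_takeWhile_of_pairwise
    (hsort.imp fun hab hb => decide_eq_true (hab.trans (of_decide_eq_true hb)))
end

section
/- Let v and s be real numbers with v ≤ s, and let A be a list of intervals such that every x in A satisfies x.l ≤ v ≤ x.r, and A is sorted in non-increasing order of right endpoints. Then the sublist of A consisting of the intervals stabbed by s equals the longest prefix of A all of whose elements x satisfy s ≤ x.r; that is, A.filter (fun x => x.l ≤ s ∧ s ≤ x.r) = A.takeWhile (fun x => s ≤ x.r). -/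
/-!
Every interval of `A` starts at or before `v ≤ s`, so being stabbed by `s` reduces to
`s ≤ x.r`. Since right endpoints decrease along `A`, once that condition fails it fails for
the rest of the list, so filtering by it keeps exactly the longest prefix satisfying it.
-/

theorem List.filter_eq_takeWhile_of_pairwise_s6 {α : Type*} {p : α → Bool} {l : List α}
    (hl : l.Pairwise (fun a b => p b → p a)) : l.filter p = l.takeWhile p := by
  induction l with
  | nil => rfl
  | cons a l ih =>
    obtain ⟨ha, hl⟩ := List.pairwise_cons.mp hl
    by_cases hpa : p a
    · rw [List.filter_cons_of_pos hpa, List.takeWhile_cons_of_pos hpa, ih hl]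
    · rw [List.filter_cons_of_neg hpa, List.takeWhile_cons_of_neg hpa, List.filter_eq_nil_iff]
      exact fun b hb hpb => hpa (ha b hb hpb)

/-- Early-termination correctness when scanning the intervals of an interval-tree node
with central point `v` in decreasing order of right endpoint, for a query value `s ≥ v`:
if every interval of the list `A` contains `v` and `A` is sorted in non-increasing order
of right endpoints, then the stabbed intervals of `A` form exactly the longest prefix
whose elements satisfy `s ≤ x.r`. -/
theorem interval_tree_right_scan_prefix
    (v s : ℝ) (hvs : v ≤ s) (A : List WInterval)
    (hcov : ∀ x ∈ A, x.l ≤ v ∧ v ≤ x.r)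
    (hsort : A.Pairwise (fun a b => b.r ≤ a.r)) :
    A.filter (fun x => decide (x.l ≤ s ∧ s ≤ x.r)) =
      A.takeWhile (fun x => decide (s ≤ x.r)) := by
  have hleft : ∀ x ∈ A, x.l ≤ s := fun x hx => (hcov x hx).1.trans hvs
  calc A.filter (fun x => decide (x.l ≤ s ∧ s ≤ x.r))
      = A.filter (fun x => decide (s ≤ x.r)) :=
        List.filter_congr fun x hx => by simp [hleft x hx]
    _ = A.takeWhile (fun x => decide (s ≤ x.r)) :=
        List.filter_eq_takeWhile_of_pairwise_s6 <|
          hsort.imp fun hba hsb => decide_eq_true (le_trans (of_decide_eq_true hsb) hba)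
end
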